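/- arXiv:1904.05930 — 3 statements merged into one kernel-verified Lean document; each statement's English description precedes it below -/
import Mathlib

section
/- Let c be an n×n real positive semidefinite symmetric matrix and b = (b_{ijk}) ∈ ℝ^{n³}. Then the linear system of n³ equations in unknowns (a_{ijk}): a_{ijk} + c_{jk}·∑_q a_{qiq} = b_{ijk} for all i,j,k ∈ {1,…,n}, viewed as a linear map L on ℝ^{n³}, has determinant det(L) = det(I_n + c); in particular L is invertible. -/
open Matrix

/-!
Write `L = 1 + T ∘ C`, where `C a = (∑_q a_{qiq})_i` contracts the first and last indices of
`a ∈ R^{n³}` and `T x = (c_{jk} x_i)_{ijk}`. Then `C ∘ T` is multiplication by `c` on `Rⁿ`, so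
Sylvester's identity `det (1 + T ∘ C) = det (1 + C ∘ T)` gives `det L = det (1 + c)`, which is
positive when `c` is positive semidefinite.
-/

theorem LinearMap.det_one_add_comp_comm {R M N : Type*} [CommRing R]
    [AddCommGroup M] [Module R M] [Module.Free R M] [Module.Finite R M]
    [AddCommGroup N] [Module R N] [Module.Free R N] [Module.Finite R N]
    (f : M →ₗ[R] N) (g : N →ₗ[R] M) :
    LinearMap.det (1 + g ∘ₗ f) = LinearMap.det (1 + f ∘ₗ g) := by
  classical
  let bM := Module.Free.chooseBasis R M
  let bN := Module.Free.chooseBasis R N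
  rw [← LinearMap.det_toMatrix bM, ← LinearMap.det_toMatrix bN, map_add, map_add,
    LinearMap.toMatrix_one, LinearMap.toMatrix_one, LinearMap.toMatrix_comp bM bN bM,
    LinearMap.toMatrix_comp bN bM bN, det_one_add_mul_comm]

section Contraction

variable {R ι : Type*} [CommRing R] [Fintype ι]

variable (R ι) in
def contractFirstLast : (ι → ι → ι → R) →ₗ[R] (ι → R) where
  toFun a i := ∑ q, a q i q
  map_add' a a' := by ext; simp [Finset.sum_add_distrib]
  map_smul' r a := by ext; simp [Finset.mul_sum]

def tensorMatrix (c : Matrix ι ι R) : (ι → R) →ₗ[R] (ι → ι → ι → R) where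
  toFun x i j k := c j k * x i
  map_add' x x' := by ext; simp [mul_add]
  map_smul' r x := by ext; simp [mul_left_comm]

theorem contractFirstLast_comp_tensorMatrix [DecidableEq ι] (c : Matrix ι ι R) :
    contractFirstLast R ι ∘ₗ tensorMatrix c = toLin' c := by
  ext x i
  simp [contractFirstLast, tensorMatrix, mulVec, dotProduct]

theorem det_eq_det_one_add_of_apply_eq [DecidableEq ι] (c : Matrix ι ι R)
    (L : (ι → ι → ι → R) →ₗ[R] (ι → ι → ι → R))
    (hL : ∀ a i j k, L a i j k = a i j k + c j k * ∑ q, a q i q) :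
    LinearMap.det L = (1 + c).det := by
  have hL' : L = 1 + tensorMatrix c ∘ₗ contractFirstLast R ι := by
    ext a i j k
    simp [hL, tensorMatrix, contractFirstLast]
  rw [hL', LinearMap.det_one_add_comp_comm, contractFirstLast_comp_tensorMatrix,
    ← LinearMap.det_toLin', map_add (toLin' (R := R)), toLin'_one]
  rfl

end Contraction

theorem stmt_0_general (n : ℕ) (c : Matrix (Fin n) (Fin n) ℝ)
    (hpsd : c.PosSemidef)
    (L : (Fin n → Fin n → Fin n → ℝ) →ₗ[ℝ] (Fin n → Fin n → Fin n → ℝ))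
    (hL : ∀ (a : Fin n → Fin n → Fin n → ℝ) (i j k : Fin n),
      L a i j k = a i j k + c j k * ∑ q, a q i q) :
    LinearMap.det L = (1 + c).det ∧ Function.Bijective L := by
  have hdet := det_eq_det_one_add_of_apply_eq c L hL
  have hpos : 0 < (1 + c).det := (PosDef.one.add_posSemidef hpsd).det_pos
  refine ⟨hdet, (Module.End.isUnit_iff L).mp ?_⟩
  rw [LinearMap.isUnit_iff_isUnit_det, hdet]
  exact hpos.ne'.isUnit

/-- Let `c` be an `n × n` real positive semidefinite symmetric matrix and
`b ∈ ℝ^{n³}`.  The linear system `a_{ijk} + c_{jk} ∑_q a_{qiq} = b_{ijk}`, viewed as a linear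
map `L` on `ℝ^{n³}`, satisfies `det L = det (Iₙ + c)`; in particular `L` is invertible. -/
theorem stmt_0 (n : ℕ) (c : Matrix (Fin n) (Fin n) ℝ)
    (hsymm : c.IsSymm) (hpsd : c.PosSemidef)
    (b : Fin n → Fin n → Fin n → ℝ)
    (L : (Fin n → Fin n → Fin n → ℝ) →ₗ[ℝ] (Fin n → Fin n → Fin n → ℝ))
    (hL : ∀ (a : Fin n → Fin n → Fin n → ℝ) (i j k : Fin n),
      L a i j k = a i j k + c j k * ∑ q, a q i q) :
    LinearMap.det L = (1 + c).det ∧ Function.Bijective L :=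
  stmt_0_general n c hpsd L hL
end

section
/- Let c be an n×n real positive semidefinite symmetric matrix and b ∈ ℝ^{n³}. Define h ∈ ℝ^n by h_i = ∑_q b_{qiq}. Then a_{ijk} := b_{ijk} − c_{jk}·[(I+c)^{-1} h]_i is the unique solution of the system a_{ijk} + c_{jk}·∑_q a_{qiq} = b_{ijk} for all i,j,k ∈ {1,…,n}. -/
open Matrix

/-! Summing the equations `a_{ijk} + c_{jk} s_i = b_{ijk}`, where `s_i = ∑_q a_{qiq}`, over the
indices `(q, i, q)` gives `(I + c) s = h`. So `s = (I + c)⁻¹ h` is forced, and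
then `a_{ijk} = b_{ijk} - c_{jk} s_i` is forced too; conversely this tensor has contraction `s`
because `s + c s = h`. -/

namespace Matrix

variable {ι R : Type*} [Fintype ι] [CommRing R]

def contraction (a : ι → ι → ι → R) : ι → R := fun i => ∑ q, a q i q

lemma contraction_sub_mul (c : Matrix ι ι R) (b : ι → ι → ι → R) (g : ι → R) :
    contraction (fun i j k => b i j k - c j k * g i) = contraction b - c *ᵥ g := by
  funext i
  simp only [contraction, Finset.sum_sub_distrib, Pi.sub_apply, mulVec, dotProduct]

variable [DecidableEq ι]

lemma one_add_mulVec_contraction {c : Matrix ι ι R} {a b : ι → ι → ι → R}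
    (ha : ∀ i j k, a i j k + c j k * contraction a i = b i j k) :
    (1 + c) *ᵥ contraction a = contraction b := by
  rw [add_mulVec, one_mulVec]
  funext i
  simp only [Pi.add_apply, contraction, ← ha, Finset.sum_add_distrib, mulVec, dotProduct]

theorem add_mul_contraction_eq_iff {c : Matrix ι ι R} (hc : IsUnit (1 + c))
    {a b : ι → ι → ι → R} :
    (∀ i j k, a i j k + c j k * contraction a i = b i j k) ↔
      ∀ i j k, a i j k = b i j k - c j k * ((1 + c)⁻¹ *ᵥ contraction b) i := by
  have hdet : IsUnit (1 + c).det := (isUnit_iff_isUnit_det _).1 hc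
  constructor
  · intro ha i j k
    have hs : contraction a = (1 + c)⁻¹ *ᵥ contraction b := by
      rw [← one_add_mulVec_contraction ha, mulVec_mulVec, nonsing_inv_mul _ hdet, one_mulVec]
    rw [← ha i j k, hs]
    ring
  · intro ha
    set g := (1 + c)⁻¹ *ᵥ contraction b
    have hg : (1 + c) *ᵥ g = contraction b := by
      rw [mulVec_mulVec, mul_nonsing_inv _ hdet, one_mulVec]
    have hs : contraction a = g := by
      rw [funext₃ ha, contraction_sub_mul, ← hg, add_mulVec, one_mulVec, add_sub_cancel_right]
    intro i j k
    rw [hs, ha]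
    ring

end Matrix

theorem stmt_1_general (n : ℕ) (c : Matrix (Fin n) (Fin n) ℝ)
    (hpsd : c.PosSemidef)
    (b : Fin n → Fin n → Fin n → ℝ)
    (h : Fin n → ℝ) (hh : ∀ i, h i = ∑ q, b q i q)
    (a : Fin n → Fin n → Fin n → ℝ)
    (ha : ∀ i j k, a i j k = b i j k - c j k * ((1 + c)⁻¹ *ᵥ h) i) :
    (∀ i j k, a i j k + c j k * ∑ q, a q i q = b i j k) ∧
    (∀ a' : Fin n → Fin n → Fin n → ℝ,
      (∀ i j k, a' i j k + c j k * ∑ q, a' q i q = b i j k) → a' = a) := by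
  have hc : IsUnit (1 + c) := (PosDef.one.add_posSemidef hpsd).isUnit
  obtain rfl : h = contraction b := funext hh
  refine ⟨(add_mul_contraction_eq_iff hc).2 ha, fun a' ha' => ?_⟩
  funext i j k
  rw [(add_mul_contraction_eq_iff hc).1 ha' i j k, ha]

/-- For `c` positive semidefinite symmetric and `b ∈ ℝ^{n³}`, setting
`h_i = ∑_q b_{qiq}`, the tensor `a_{ijk} = b_{ijk} − c_{jk}·[(I+c)⁻¹ h]_i` is the unique
solution of the system `a_{ijk} + c_{jk} ∑_q a_{qiq} = b_{ijk}`. -/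
theorem stmt_1 (n : ℕ) (c : Matrix (Fin n) (Fin n) ℝ)
    (hsymm : c.IsSymm) (hpsd : c.PosSemidef)
    (b : Fin n → Fin n → Fin n → ℝ)
    (h : Fin n → ℝ) (hh : ∀ i, h i = ∑ q, b q i q)
    (a : Fin n → Fin n → Fin n → ℝ)
    (ha : ∀ i j k, a i j k = b i j k - c j k * ((1 + c)⁻¹ *ᵥ h) i) :
    (∀ i j k, a i j k + c j k * ∑ q, a q i q = b i j k) ∧
    (∀ a' : Fin n → Fin n → Fin n → ℝ,
      (∀ i j k, a' i j k + c j k * ∑ q, a' q i q = b i j k) → a' = a) :=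
  stmt_1_general n c hpsd b h hh a ha
end

section
/- Let N = 9 and u_l = (cos(2πl/9), sin(2πl/9)) for l = 1,…,9. Then ∑_{l=1}^9 e^{iα_l} = 0 and ∑_{l=1}^9 e^{3iα_l} = 0 with α_l = 2πl/9; equivalently, ∑_l (u_l·e_1)^3 = ∑_l (u_l·e_2)^3 = ∑_l (u_l·e_1)²(u_l·e_2) = ∑_l (u_l·e_1)(u_l·e_2)² = 0. Consequently all G-linear variations δ_{ijk}V of the associated junction varifold of 9 half-lines vanish identically. -/
/-!
The angles `α_l = 2π(l+1)/9` make `e^{iα_l}` and `e^{3iα_l}` run through the powers `ζ^(l+1)`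
and `(ζ³)^(l+1)` of a primitive 9th root of unity `ζ`; as `9 ∤ 1` and `9 ∤ 3`, both are
nontrivial 9th roots of unity and the geometric sums vanish. Taking real and imaginary parts
gives `∑ cos α = ∑ sin α = ∑ cos 3α = ∑ sin 3α = 0`, and the triple-angle formulas together with
`cos² + sin² = 1` express every cubic monomial in `(cos α, sin α)` through these four sums.
-/

open Complex Finset

theorem sum_fin_pow_succ_eq_zero {K : Type*} [Field K] {w : K} {n : ℕ} (hw : w ≠ 1)
    (hwn : w ^ n = 1) : ∑ l : Fin n, w ^ ((l : ℕ) + 1) = 0 := by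
  rw [Fin.sum_univ_eq_sum_range (fun l => w ^ (l + 1))]
  simp_rw [pow_succ', ← mul_sum, geom_sum_eq hw, hwn, sub_self, zero_div, mul_zero]

theorem IsPrimitiveRoot.sum_fin_pow_pow_succ_eq_zero {K : Type*} [Field K] {ζ : K} {n m : ℕ}
    (hζ : IsPrimitiveRoot ζ n) (hm : ¬ n ∣ m) : ∑ l : Fin n, (ζ ^ m) ^ ((l : ℕ) + 1) = 0 :=
  sum_fin_pow_succ_eq_zero (by rwa [Ne, hζ.pow_eq_one_iff_dvd])
    (by rw [← pow_mul, mul_comm, pow_mul, hζ.pow_eq_one, one_pow])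

theorem sum_exp_mul_two_pi_div_mul_I_eq_zero {n m : ℕ} (hm : ¬ n ∣ m) :
    ∑ l : Fin n, exp (m * ((2 * Real.pi * ((l : ℕ) + 1) / n : ℝ) : ℂ) * I) = 0 := by
  rcases eq_or_ne n 0 with rfl | hn
  · simp
  convert (isPrimitiveRoot_exp n hn).sum_fin_pow_pow_succ_eq_zero hm using 2 with l
  rw [← exp_nat_mul, ← exp_nat_mul]
  push_cast
  ring_nf

section CubicMoments

variable {ι : Type*} [Fintype ι] (α : ι → ℝ)

theorem sum_cos_eq_zero_of_sum_exp_eq_zero (h : ∑ l, exp (α l * I) = 0) :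
    ∑ l, Real.cos (α l) = 0 := by
  simpa [re_sum, exp_ofReal_mul_I_re] using congrArg re h

theorem sum_sin_eq_zero_of_sum_exp_eq_zero (h : ∑ l, exp (α l * I) = 0) :
    ∑ l, Real.sin (α l) = 0 := by
  simpa [im_sum, exp_ofReal_mul_I_im] using congrArg im h

variable {α}

theorem sum_cos_pow_three_eq_zero (h1 : ∑ l, Real.cos (α l) = 0)
    (h3 : ∑ l, Real.cos (3 * α l) = 0) : ∑ l, Real.cos (α l) ^ 3 = 0 := by
  have h (x : ℝ) : Real.cos x ^ 3 = Real.cos (3 * x) / 4 + 3 / 4 * Real.cos x := by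
    rw [Real.cos_three_mul]; ring
  simp only [h, sum_add_distrib, ← sum_div, ← mul_sum, h1, h3]
  norm_num

theorem sum_sin_pow_three_eq_zero (h1 : ∑ l, Real.sin (α l) = 0)
    (h3 : ∑ l, Real.sin (3 * α l) = 0) : ∑ l, Real.sin (α l) ^ 3 = 0 := by
  have h (x : ℝ) : Real.sin x ^ 3 = 3 / 4 * Real.sin x - Real.sin (3 * x) / 4 := by
    rw [Real.sin_three_mul]; ring
  simp only [h, sum_sub_distrib, ← sum_div, ← mul_sum, h1, h3]
  norm_num

theorem sum_cos_sq_mul_sin_eq_zero (h1 : ∑ l, Real.sin (α l) = 0)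
    (h3 : ∑ l, Real.sin (α l) ^ 3 = 0) : ∑ l, Real.cos (α l) ^ 2 * Real.sin (α l) = 0 := by
  simp only [Real.cos_sq', sub_mul, one_mul, ← pow_succ, sum_sub_distrib, h1, h3, sub_zero]

theorem sum_cos_mul_sin_sq_eq_zero (h1 : ∑ l, Real.cos (α l) = 0)
    (h3 : ∑ l, Real.cos (α l) ^ 3 = 0) : ∑ l, Real.cos (α l) * Real.sin (α l) ^ 2 = 0 := by
  simp only [Real.sin_sq, mul_sub, mul_one, ← pow_succ', sum_sub_distrib, h1, h3, sub_zero]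

end CubicMoments

theorem sum_cubic_eq_zero {ι : Type*} [Fintype ι] {x y : ι → ℝ}
    (hxxx : ∑ l, x l ^ 3 = 0) (hyyy : ∑ l, y l ^ 3 = 0) (hxxy : ∑ l, x l ^ 2 * y l = 0)
    (hxyy : ∑ l, x l * y l ^ 2 = 0) (i j k : Fin 2) :
    ∑ l, ![x l, y l] i * ![x l, y l] j * ![x l, y l] k = 0 := by
  fin_cases i <;> fin_cases j <;> fin_cases k <;>
    simp only [Fin.zero_eta, Fin.mk_one, Matrix.cons_val_zero, Matrix.cons_val_one] <;>
    first
    | (refine (sum_congr rfl fun l _ => ?_).trans hxxx; ring1)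
    | (refine (sum_congr rfl fun l _ => ?_).trans hyyy; ring1)
    | (refine (sum_congr rfl fun l _ => ?_).trans hxxy; ring1)
    | (refine (sum_congr rfl fun l _ => ?_).trans hxyy; ring1)

theorem sum_cubic_cos_sin_eq_zero {ι : Type*} [Fintype ι] {α : ι → ℝ}
    (h1 : ∑ l, exp (α l * I) = 0) (h3 : ∑ l, exp (3 * α l * I) = 0) (i j k : Fin 2) :
    ∑ l, ![Real.cos (α l), Real.sin (α l)] i * ![Real.cos (α l), Real.sin (α l)] j *
      ![Real.cos (α l), Real.sin (α l)] k = 0 := by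
  have h3' : ∑ l, exp (((3 * α l : ℝ) : ℂ) * I) = 0 := by simpa using h3
  have hc := sum_cos_eq_zero_of_sum_exp_eq_zero α h1
  have hs := sum_sin_eq_zero_of_sum_exp_eq_zero α h1
  have hccc := sum_cos_pow_three_eq_zero hc (sum_cos_eq_zero_of_sum_exp_eq_zero _ h3')
  have hsss := sum_sin_pow_three_eq_zero hs (sum_sin_eq_zero_of_sum_exp_eq_zero _ h3')
  exact sum_cubic_eq_zero hccc hsss (sum_cos_sq_mul_sin_eq_zero hs hsss)
    (sum_cos_mul_sin_sq_eq_zero hc hccc) i j k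

/-- For `N = 9` and `u_l = (cos α_l, sin α_l)` with `α_l = 2πl/9`
(`l = 1, …, 9`), one has `∑_l e^{iα_l} = 0` and `∑_l e^{3iα_l} = 0`; equivalently all the
cubic sums `∑ (u_l·e₁)³`, `∑ (u_l·e₂)³`, `∑ (u_l·e₁)²(u_l·e₂)`, `∑ (u_l·e₁)(u_l·e₂)²`
vanish.  Consequently all `G`-linear variations `δ_{ijk} V` of the associated junction
varifold of `9` half-lines (which equal `−∑_l (u_l)_i (u_l)_j (u_l)_k δ₀`) vanish
identically, i.e. `∑_l (u_l)_i (u_l)_j (u_l)_k = 0` for all `i, j, k`. -/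
theorem stmt_14 (α : Fin 9 → ℝ)
    (hα : ∀ l : Fin 9, α l = 2 * Real.pi * ((l : ℕ) + 1) / 9)
    (u : Fin 9 → Fin 2 → ℝ)
    (hu : ∀ l, u l = ![Real.cos (α l), Real.sin (α l)]) :
    (∑ l, Complex.exp ((α l : ℂ) * Complex.I) = 0) ∧
    (∑ l, Complex.exp (3 * (α l : ℂ) * Complex.I) = 0) ∧
    (∑ l, (u l 0) ^ 3 = 0) ∧ (∑ l, (u l 1) ^ 3 = 0) ∧
    (∑ l, (u l 0) ^ 2 * u l 1 = 0) ∧ (∑ l, u l 0 * (u l 1) ^ 2 = 0) ∧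
    (∀ i j k : Fin 2, ∑ l, u l i * u l j * u l k = 0) := by
  have h1 : ∑ l, exp (α l * I) = 0 := by
    simpa [hα] using sum_exp_mul_two_pi_div_mul_I_eq_zero (n := 9) (m := 1) (by norm_num)
  have h3 : ∑ l, exp (3 * α l * I) = 0 := by
    simpa [hα] using sum_exp_mul_two_pi_div_mul_I_eq_zero (n := 9) (m := 3) (by norm_num)
  have hcubic := sum_cubic_cos_sin_eq_zero h1 h3
  obtain rfl : u = fun l => ![Real.cos (α l), Real.sin (α l)] := funext hu
  refine ⟨h1, h3, ?_, ?_, ?_, ?_, hcubic⟩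
  · simpa [pow_succ] using hcubic 0 0 0
  · simpa [pow_succ] using hcubic 1 1 1
  · simpa [sq] using hcubic 0 0 1
  · simpa [sq, mul_assoc] using hcubic 0 1 1
end
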